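/- arXiv:2602.15341 — 3 statements merged into one kernel-verified Lean document; each statement's English description precedes it below -/
import Mathlib

section
/- Let Γ=(V,E) be a finite graph and M ⊆ E a positive matching (i.e., there exists w: V → ℝ with w(u)+w(v) > 0 exactly on edges of M). Then every submatching M' ⊆ M is also a positive matching in Γ. -/
/-- A set of (undirected) edges `M ⊆ E` of a graph on `V` is *positive* if some weight
function `w : V → ℝ` satisfies `w(u) + w(v) > 0` exactly on the edges of `M`. -/
def IsPosMatching {V : Type*} (E M : Set (Sym2 V)) : Prop :=
  ∃ w : V → ℝ, ∀ u v : V, s(u, v) ∈ E → (0 < w u + w v ↔ s(u, v) ∈ M)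

/-- `M` is a matching: each vertex is incident to at most one edge of `M`. -/
def IsGraphMatching {V : Type*} (M : Set (Sym2 V)) : Prop :=
  ∀ u v v' : V, s(u, v) ∈ M → s(u, v') ∈ M → v = v'

/-- Every submatching of a positive matching in a finite graph is positive. -/
theorem stmt1 {V : Type*} [Fintype V] (E M M' : Set (Sym2 V))
    (hME : M ⊆ E) (hM : IsGraphMatching M) (hpos : IsPosMatching E M)
    (hM'M : M' ⊆ M) (hM' : IsGraphMatching M') :
    IsPosMatching E M' := by
  classical
  obtain ⟨w, hw⟩ := hpos
  set B : ℝ := ∑ v, |w v| with hB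
  have hBnn : (0:ℝ) ≤ B := Finset.sum_nonneg fun i _ => abs_nonneg _
  have hwB : ∀ v, w v ≤ B := fun v =>
    (le_abs_self _).trans
      (Finset.single_le_sum (f := fun v => |w v|) (fun i _ => abs_nonneg _) (Finset.mem_univ v))
  set C : ℝ := 2 * B + 1 with hC
  set S : Set V := {v | ∃ x, s(v, x) ∈ M ∧ s(v, x) ∉ M'} with hS
  refine ⟨fun v => w v - (if v ∈ S then C else 0), ?_⟩
  intro u v hE
  have hle : ∀ x : V, w x - (if x ∈ S then C else 0) ≤ w x := by
    intro x; split <;> [linarith; simp]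
  constructor
  · intro hpos'
    have hM0 : s(u, v) ∈ M := by
      rw [← hw u v hE]
      have h1 := hle u; have h2 := hle v; dsimp only at hpos' ⊢; linarith
    by_contra hnot
    have hu : u ∈ S := ⟨v, hM0, hnot⟩
    have h2 := hle v
    have h3 := hwB u; have h4 := hwB v
    simp only [if_pos hu] at hpos'
    have h2' : w v - (if v ∈ S then C else 0) ≤ w v := h2
    linarith
  · intro hmem
    have hM0 : s(u, v) ∈ M := hM'M hmem
    have huS : u ∉ S := by
      rintro ⟨x, hux, hnx⟩
      exact hnx (hM u v x hM0 hux ▸ hmem)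
    have hvS : v ∉ S := by
      rintro ⟨x, hvx, hnx⟩
      have hvu : s(v, u) ∈ M := by rwa [Sym2.eq_swap]
      have hvu' : s(v, u) ∈ M' := by rwa [Sym2.eq_swap]
      exact hnx (hM v u x hvu hvx ▸ hvu')
    have hp : 0 < w u + w v := (hw u v hE).mpr hM0
    simp only [if_neg huS, if_neg hvS]
    linarith
end

section
/- Let G be the bipartite DAG obtained from a bipartite graph U=(L,R;E) by orienting all edges from L to R, and let f: L∪R → ℝ. If the set of edges (ℓ,r) ∈ E with f(ℓ) > f(r) contains a matching M of size |M| ≥ ε·|L∪R|, then for every function g: L∪R → ℝ that is monotone on G (i.e., g(ℓ) ≤ g(r) for all (ℓ,r) ∈ E), the number of vertices v with f(v) ≠ g(v) is at least ε·|L∪R|. -/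
/-- Choosing a covered endpoint of each edge is injective on a matching. -/
theorem card_le_card_of_covers_matching {L R : Type*} (M : Finset (L × R))
    (hmatch : ∀ e ∈ M, ∀ e' ∈ M, (e.1 = e'.1 ∨ e.2 = e'.2) → e = e')
    (C : Finset (L ⊕ R)) (hcover : ∀ e ∈ M, Sum.inl e.1 ∈ C ∨ Sum.inr e.2 ∈ C) :
    M.card ≤ C.card := by
  classical
  let endpoint : L × R → L ⊕ R := fun e => if Sum.inl e.1 ∈ C then Sum.inl e.1 else Sum.inr e.2
  refine Finset.card_le_card_of_injOn endpoint (fun e he => ?_) (fun e he e' he' h => ?_)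
  · simp only [endpoint, Finset.mem_coe]
    split_ifs with h
    exacts [h, (hcover e he).resolve_left h]
  · refine hmatch e he e' he' ?_
    simp only [endpoint] at h
    split_ifs at h <;> simp_all

theorem ne_or_ne_of_lt_of_le {α : Type*} [Preorder α] {a b c d : α}
    (hf : b < a) (hg : c ≤ d) : a ≠ c ∨ b ≠ d := by
  by_contra! h
  exact (hf.trans_le (h.1 ▸ h.2 ▸ hg)).false

/-- If the violated edges of `f` on the bipartite DAG (all edges oriented `L → R`)
contain a matching of size at least `ε · |L ∪ R|`, then `f` differs from every
monotone function `g` on at least `ε · |L ∪ R|` vertices. -/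
theorem stmt2 {L R : Type*} [Fintype L] [Fintype R]
    (E : Finset (L × R)) (f : L ⊕ R → ℝ) (ε : ℝ) (M : Finset (L × R))
    (hME : M ⊆ E)
    (hviol : ∀ e ∈ M, f (Sum.inl e.1) > f (Sum.inr e.2))
    (hmatch : ∀ e ∈ M, ∀ e' ∈ M, (e.1 = e'.1 ∨ e.2 = e'.2) → e = e')
    (hsize : ε * (Fintype.card L + Fintype.card R) ≤ (M.card : ℝ))
    (g : L ⊕ R → ℝ)
    (hmono : ∀ e ∈ E, g (Sum.inl e.1) ≤ g (Sum.inr e.2)) :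
    ε * (Fintype.card L + Fintype.card R)
      ≤ ((Finset.univ.filter fun v : L ⊕ R => f v ≠ g v).card : ℝ) := by
  have hcover : ∀ e ∈ M, Sum.inl e.1 ∈ Finset.univ.filter (fun v => f v ≠ g v) ∨
      Sum.inr e.2 ∈ Finset.univ.filter (fun v => f v ≠ g v) := by
    intro e he
    simpa using ne_or_ne_of_lt_of_le (hviol e he) (hmono e (hME he))
  exact hsize.trans (mod_cast card_le_card_of_covers_matching M hmatch _ hcover)
end

section
/- Let h: [−B,B] → ℝ be m-strongly convex (h''(x) ≥ m > 0) with minimizer x⋆ ∈ [−B,B] satisfying x⋆ ≥ γ/2 for some γ > 0, and let d be a random variable on [−B,B] with density proportional to e^{−h(d)}. Then Pr[d ≤ 0] ≤ exp(−m·γ²/8). -/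
/-!
Write `Z = ∫_{-B}^{B} e^{-h}`. Shifting by `γ/2` lowers `h` by at least `m γ²/8` on `[-B, 0)`:
for `x < 0` the point `x + γ/2` still lies left of the minimiser, and strong convexity gives
`h (x + γ/2) + (m/2)(γ/2)² ≤ h x`. Hence `∫_{-B}^{0} e^{-h} ≤ e^{-mγ²/8} ∫_{-B+γ/2}^{γ/2} e^{-h}`,
and the last integral is at most `Z`.
-/

open Set MeasureTheory Real

theorem strongConvexOn_of_le_iteratedDerivWithin {D : Set ℝ} (hD : Convex ℝ D)
    (hD' : UniqueDiffOn ℝ D) {f : ℝ → ℝ} {m : ℝ} (hf : ContDiffOn ℝ 2 f D)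
    (hm : ∀ x ∈ interior D, m ≤ iteratedDerivWithin 2 f D x) : StrongConvexOn D m f := by
  rw [strongConvexOn_iff_convex]
  simp only [Real.norm_eq_abs, sq_abs]
  have hf' : DifferentiableOn ℝ (derivWithin f D) D :=
    (hf.derivWithin hD' (by norm_num)).differentiableOn one_ne_zero
  refine convexOn_of_hasDerivWithinAt2_nonneg hD (f' := fun x ↦ derivWithin f D x - m * x)
    (f'' := fun x ↦ iteratedDerivWithin 2 f D x - m)
    (hf.continuousOn.sub (by fun_prop)) (fun x hx ↦ ?_) (fun x hx ↦ ?_)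
    (fun x hx ↦ sub_nonneg.2 (hm x hx))
  · have hx' : x ∈ D := interior_subset hx
    have hsq : HasDerivAt (fun y : ℝ ↦ m / 2 * y ^ 2) (m * x) x :=
      ((hasDerivAt_pow 2 x).const_mul (m / 2)).congr_deriv (by norm_num; ring)
    exact ((hf.differentiableOn two_ne_zero x hx').hasDerivWithinAt.mono interior_subset).sub
      hsq.hasDerivWithinAt
  · have hx' : x ∈ D := interior_subset hx
    rw [iteratedDerivWithin_succ, iteratedDerivWithin_one]
    exact ((hf' x hx').hasDerivWithinAt.mono interior_subset).sub
      ((hasDerivAt_id x).const_mul m |>.congr_deriv (mul_one m)).hasDerivWithinAt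

theorem StrongConvexOn.add_sq_le_of_isMinOn {s : Set ℝ} {f : ℝ → ℝ} {m c x y : ℝ}
    (hf : StrongConvexOn s m f) (hm : 0 ≤ m) (hmin : IsMinOn f s c) (hc : c ∈ s) (hx : x ∈ s)
    (hxy : x ≤ y) (hyc : y < c) : f y + m / 2 * (y - x) ^ 2 ≤ f x := by
  have hd : 0 < c - x := by linarith
  have hy : y ∈ s := hf.1.ordConnected.out hx hc ⟨hxy, hyc.le⟩
  set a := (c - y) / (c - x)
  set b := (y - x) / (c - x)
  have ha : 0 < a := div_pos (by linarith) hd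
  have hb : 0 ≤ b := div_nonneg (by linarith) hd.le
  have hsum : a + b = 1 := by simp only [a, b]; field_simp; ring
  have hconv := hf.2 hx hc ha.le hb hsum
  have hcomb : a * x + b * c = y := by simp only [a, b]; field_simp; ring
  have hmod : a * b * (m / 2 * (x - c) ^ 2) = a * (m / 2 * ((y - x) * (c - x))) := by
    simp only [b]; field_simp; ring
  simp only [smul_eq_mul, hcomb, Real.norm_eq_abs, sq_abs, hmod] at hconv
  have hfc : b * f c ≤ b * f y := mul_le_mul_of_nonneg_left (hmin hy) hb
  have hchord : a * (f y + m / 2 * ((y - x) * (c - x))) ≤ a * f x := by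
    linear_combination hconv + hfc + f y * hsum
  calc f y + m / 2 * (y - x) ^ 2 ≤ f y + m / 2 * ((y - x) * (c - x)) := by
        gcongr
        nlinarith
    _ ≤ f x := le_of_mul_le_mul_left hchord ha

theorem intervalIntegral.integral_le_mul_integral_comp_add {f : ℝ → ℝ} {a b δ C : ℝ}
    (hab : a ≤ b) (hf : IntervalIntegrable f volume a b)
    (hfδ : IntervalIntegrable f volume (a + δ) (b + δ))
    (hle : ∀ x ∈ Ioo a b, f x ≤ C * f (x + δ)) :
    ∫ x in a..b, f x ≤ C * ∫ x in (a + δ)..(b + δ), f x := by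
  have hshift : IntervalIntegrable (fun x ↦ C * f (x + δ)) volume a b := by
    simpa using (hfδ.comp_add_right δ).const_mul C
  calc ∫ x in a..b, f x ≤ ∫ x in a..b, C * f (x + δ) :=
        intervalIntegral.integral_mono_on_of_le_Ioo hab hf hshift hle
    _ = C * ∫ x in (a + δ)..(b + δ), f x := by
        rw [intervalIntegral.integral_const_mul, intervalIntegral.integral_comp_add_right]

theorem stmt12_general (B γ m : ℝ) (hγ : 0 < γ) (hm : 0 < m)
    (h : ℝ → ℝ) (hsmooth : ContDiffOn ℝ 2 h (Set.Icc (-B) B))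
    (hconv : ∀ x ∈ Set.Icc (-B) B, m ≤ iteratedDerivWithin 2 h (Set.Icc (-B) B) x)
    (xstar : ℝ) (hx1 : xstar ∈ Set.Icc (-B) B)
    (hxmin : ∀ x ∈ Set.Icc (-B) B, h xstar ≤ h x)
    (hxγ : γ / 2 ≤ xstar) :
    (∫ x in (-B)..0, Real.exp (-h x)) / (∫ x in (-B)..B, Real.exp (-h x))
      ≤ Real.exp (-(m * γ ^ 2 / 8)) := by
  have hγB : γ / 2 ≤ B := hxγ.trans hx1.2
  have hstrong : StrongConvexOn (Icc (-B) B) m h :=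
    strongConvexOn_of_le_iteratedDerivWithin (convex_Icc _ _) (uniqueDiffOn_Icc (by linarith))
      hsmooth fun x hx ↦ hconv x (interior_subset hx)
  have hint : IntervalIntegrable (fun x ↦ exp (-h x)) volume (-B) B :=
    (hsmooth.continuousOn.neg.rexp.mono (uIcc_of_le (by linarith)).subset).intervalIntegrable
  have hint_sub {a b : ℝ} (ha : -B ≤ a) (hab : a ≤ b) (hb : b ≤ B) :
      IntervalIntegrable (fun x ↦ exp (-h x)) volume a b :=
    hint.mono_set (by
      rw [uIcc_of_le hab, uIcc_of_le (by linarith)]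
      exact Icc_subset_Icc ha hb)
  have hdrop : ∀ x ∈ Ioo (-B) 0, exp (-h x) ≤ exp (-(m * γ ^ 2 / 8)) * exp (-h (x + γ / 2)) := by
    intro x ⟨hBx, hx0⟩
    have := hstrong.add_sq_le_of_isMinOn (y := x + γ / 2) hm.le hxmin hx1 ⟨hBx.le, by linarith⟩
      (by linarith) (by linarith)
    rw [← exp_add, exp_le_exp]
    linarith
  have htail := intervalIntegral.integral_le_mul_integral_comp_add (by linarith)
    (hint_sub le_rfl (by linarith) (by linarith)) (hint_sub (by linarith) (by linarith)
      (by linarith)) hdrop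
  have hwindow : ∫ x in (-B + γ / 2)..(0 + γ / 2), exp (-h x) ≤ ∫ x in (-B)..B, exp (-h x) :=
    intervalIntegral.integral_mono_interval (by linarith) (by linarith) (by linarith)
      (Filter.Eventually.of_forall fun x ↦ (exp_pos _).le) hint
  rw [div_le_iff₀ (intervalIntegral.intervalIntegral_pos_of_pos_on hint (fun x _ ↦ exp_pos _)
    (by linarith))]
  exact htail.trans (mul_le_mul_of_nonneg_left hwindow (exp_pos _).le)

/-- One-sided tail bound for a strongly log-concave density on `[-B, B]` whose mode
is at least `γ/2`: the probability of landing in `[-B, 0]` is at most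
`exp(-m γ²/8)`. -/
theorem stmt12 (B γ m : ℝ) (hB : 0 < B) (hγ : 0 < γ) (hm : 0 < m)
    (h : ℝ → ℝ) (hsmooth : ContDiffOn ℝ 2 h (Set.Icc (-B) B))
    (hconv : ∀ x ∈ Set.Icc (-B) B, m ≤ iteratedDerivWithin 2 h (Set.Icc (-B) B) x)
    (xstar : ℝ) (hx1 : xstar ∈ Set.Icc (-B) B)
    (hxmin : ∀ x ∈ Set.Icc (-B) B, h xstar ≤ h x)
    (hxγ : γ / 2 ≤ xstar) :
    (∫ x in (-B)..0, Real.exp (-h x)) / (∫ x in (-B)..B, Real.exp (-h x))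
      ≤ Real.exp (-(m * γ ^ 2 / 8)) :=
  stmt12_general B γ m hγ hm h hsmooth hconv xstar hx1 hxmin hxγ
end
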